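/- arXiv:1407.1338 — 8 statements merged into one kernel-verified Lean document; each statement's English description precedes it below -/
import Mathlib

section
/- A k × ℓ row-stochastic matrix Q satisfies the ε-local differential privacy constraints Q(y|x) ≤ e^ε Q(y|x') for all x, x', y if and only if Q can be written as Q = S·Θ where S is a k × ℓ matrix with all entries in the interval [1, e^ε] and Θ = diag(θ₁,...,θ_ℓ) with nonnegative diagonal entries. -/
open Real

/-!
Column by column: a column `q ≥ 0` whose entries are within a factor `c ≥ 1` of each other
factors as `q = s * t` with `t = min q` and `s = q / t ∈ [1, c]`; conversely any two entries
of `s * t` with `s ∈ [1, c]`, `t ≥ 0` are within the factor `c` of each other.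
-/

section ColumnFactorization

variable {ι : Type*} {c : ℝ} {q : ι → ℝ}

theorem exists_eq_mul_mem_Icc_of_le_mul [Finite ι] (hc : 1 ≤ c) (hq : ∀ i, 0 ≤ q i)
    (h : ∀ i i', q i ≤ c * q i') :
    ∃ (s : ι → ℝ) (t : ℝ), (∀ i, s i ∈ Set.Icc 1 c) ∧ 0 ≤ t ∧ ∀ i, q i = s i * t := by
  set t := ⨅ i, q i
  have ht_nonneg : 0 ≤ t := Real.iInf_nonneg hq
  have ht_le : ∀ i, t ≤ q i := fun i => ciInf_le (Set.finite_range q).bddBelow i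
  have hle_ct : ∀ i, q i ≤ c * t := fun i => by
    have : Nonempty ι := ⟨i⟩
    obtain ⟨i₀, hi₀⟩ := exists_eq_ciInf_of_finite (f := q)
    exact (h i i₀).trans_eq (by rw [hi₀])
  rcases ht_nonneg.eq_or_lt with ht_zero | ht_pos
  · refine ⟨fun _ => 1, 0, fun _ => ⟨le_rfl, hc⟩, le_rfl, fun i => ?_⟩
    have := hle_ct i
    rw [← ht_zero, mul_zero] at this
    simpa using le_antisymm this (hq i)
  · refine ⟨fun i => q i / t, t, fun i => ⟨?_, ?_⟩, ht_nonneg, fun i => ?_⟩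
    · exact (one_le_div ht_pos).2 (ht_le i)
    · exact (div_le_iff₀ ht_pos).2 (hle_ct i)
    · exact (div_mul_cancel₀ _ ht_pos.ne').symm

theorem le_mul_of_eq_mul_mem_Icc {s : ι → ℝ} {t : ℝ} (hs : ∀ i, s i ∈ Set.Icc 1 c)
    (ht : 0 ≤ t) (hq : ∀ i, q i = s i * t) (i i' : ι) : q i ≤ c * q i' :=
  calc q i = s i * t := hq i
    _ ≤ c * t := mul_le_mul_of_nonneg_right (hs i).2 ht
    _ ≤ c * (s i' * t) := mul_le_mul_of_nonneg_left (le_mul_of_one_le_left ht (hs i').1)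
      (zero_le_one.trans ((hs i').1.trans (hs i').2))
    _ = c * q i' := by rw [hq i']

end ColumnFactorization

theorem ldp_iff_staircase_decomposition_general
    (k l : ℕ) (ε : ℝ) (hε : 0 ≤ ε) (Q : Fin k → Fin l → ℝ)
    (hQnonneg : ∀ i j, 0 ≤ Q i j) :
    (∀ i i' : Fin k, ∀ j : Fin l, Q i j ≤ Real.exp ε * Q i' j) ↔
      ∃ (S : Fin k → Fin l → ℝ) (θ : Fin l → ℝ),
        (∀ i j, 1 ≤ S i j ∧ S i j ≤ Real.exp ε) ∧
        (∀ j, 0 ≤ θ j) ∧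
        (∀ i j, Q i j = S i j * θ j) := by
  constructor
  · intro hQ
    choose S θ hS hθ hSθ using fun j =>
      exists_eq_mul_mem_Icc_of_le_mul (q := fun i => Q i j) (one_le_exp hε)
        (fun i => hQnonneg i j) (fun i i' => hQ i i' j)
    exact ⟨fun i j => S j i, θ, fun i j => hS j i, hθ, fun i j => hSθ j i⟩
  · rintro ⟨S, θ, hS, hθ, hSθ⟩ i i' j
    exact le_mul_of_eq_mul_mem_Icc (q := fun i => Q i j) (fun i => hS i j) (hθ j)
      (fun i => hSθ i j) i i'

/-- A `k × ℓ` row-stochastic matrix `Q` is ε-locally differentially private iff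
`Q = S·Θ` with `S` having entries in `[1, e^ε]` and `Θ = diag(θ)` with `θ ≥ 0`. -/
theorem ldp_iff_staircase_decomposition
    (k l : ℕ) (ε : ℝ) (hε : 0 ≤ ε) (Q : Fin k → Fin l → ℝ)
    (hQnonneg : ∀ i j, 0 ≤ Q i j)
    (hQrow : ∀ i, ∑ j, Q i j = 1) :
    (∀ i i' : Fin k, ∀ j : Fin l, Q i j ≤ Real.exp ε * Q i' j) ↔
      ∃ (S : Fin k → Fin l → ℝ) (θ : Fin l → ℝ),
        (∀ i j, 1 ≤ S i j ∧ S i j ≤ Real.exp ε) ∧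
        (∀ j, 0 ≤ θ j) ∧
        (∀ i j, Q i j = S i j * θ j) :=
  ldp_iff_staircase_decomposition_general k l ε hε Q hQnonneg
end

section
/- Any utility function of the form U(Q) = Σ_{z} μ(Q_z), where μ: ℝ^k → ℝ is sublinear (positively homogeneous and subadditive) and Q_z denotes the column of Q indexed by output z, satisfies the data processing inequality: for any row-stochastic matrices Q (k × ℓ) and W (ℓ × m), U(Q·W) ≤ U(Q). -/
open Real Finset

theorem map_sum_smul_le_of_sublinear {ι E : Type*} [AddCommMonoid E] [Module ℝ E]
    (μ : E → ℝ) (hhom : ∀ γ : ℝ, 0 ≤ γ → ∀ z : E, μ (γ • z) = γ * μ z)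
    (hsub : ∀ z₁ z₂ : E, μ (z₁ + z₂) ≤ μ z₁ + μ z₂)
    (s : Finset ι) (c : ι → ℝ) (hc : ∀ i ∈ s, 0 ≤ c i) (v : ι → E) :
    μ (∑ i ∈ s, c i • v i) ≤ ∑ i ∈ s, c i * μ (v i) := by
  have hzero : μ 0 = 0 := by simpa using hhom 0 le_rfl 0
  calc μ (∑ i ∈ s, c i • v i) ≤ ∑ i ∈ s, μ (c i • v i) :=
        Finset.le_sum_of_subadditive μ hzero.le hsub s _
    _ = ∑ i ∈ s, c i * μ (v i) :=
        Finset.sum_congr rfl fun i hi => hhom _ (hc i hi) _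

theorem sublinear_utility_data_processing_general
    (k l m : ℕ) (μ : (Fin k → ℝ) → ℝ)
    (hhom : ∀ (γ : ℝ), 0 ≤ γ → ∀ z : Fin k → ℝ, μ (γ • z) = γ * μ z)
    (hsub : ∀ z₁ z₂ : Fin k → ℝ, μ (z₁ + z₂) ≤ μ z₁ + μ z₂)
    (Q : Fin k → Fin l → ℝ) (W : Fin l → Fin m → ℝ)
    (hWnonneg : ∀ j z, 0 ≤ W j z) (hWrow : ∀ j, ∑ z, W j z = 1) :
    ∑ z, μ (fun i => ∑ j, Q i j * W j z) ≤ ∑ j, μ (fun i => Q i j) := by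
  have hcolumn : ∀ z, (fun i => ∑ j, Q i j * W j z) = ∑ j, W j z • fun i => Q i j := by
    intro z
    ext i
    simp [Finset.sum_apply, mul_comm]
  calc ∑ z, μ (fun i => ∑ j, Q i j * W j z)
      ≤ ∑ z, ∑ j, W j z * μ (fun i => Q i j) := by
        refine Finset.sum_le_sum fun z _ => ?_
        rw [hcolumn]
        exact map_sum_smul_le_of_sublinear μ hhom hsub _ _ (fun j _ => hWnonneg j z) _
    _ = ∑ j, μ (fun i => Q i j) := by
        rw [Finset.sum_comm]
        simp only [← Finset.sum_mul, hWrow, one_mul]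

/-- Utilities of the form `U(Q) = Σ_z μ(Q_z)` with `μ` sublinear obey the data
processing inequality: `U(Q·W) ≤ U(Q)` for row-stochastic `Q`, `W`. -/
theorem sublinear_utility_data_processing
    (k l m : ℕ) (μ : (Fin k → ℝ) → ℝ)
    (hhom : ∀ (γ : ℝ), 0 ≤ γ → ∀ z : Fin k → ℝ, μ (γ • z) = γ * μ z)
    (hsub : ∀ z₁ z₂ : Fin k → ℝ, μ (z₁ + z₂) ≤ μ z₁ + μ z₂)
    (Q : Fin k → Fin l → ℝ) (W : Fin l → Fin m → ℝ)
    (hQnonneg : ∀ i j, 0 ≤ Q i j) (hQrow : ∀ i, ∑ j, Q i j = 1)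
    (hWnonneg : ∀ j z, 0 ≤ W j z) (hWrow : ∀ j, ∑ z, W j z = 1) :
    ∑ z, μ (fun i => ∑ j, Q i j * W j z) ≤ ∑ j, μ (fun i => Q i j) :=
  sublinear_utility_data_processing_general k l m μ hhom hsub Q W hWnonneg hWrow
end

section
/- For any ε ≥ 0, any ε-locally differentially private mechanism Q from a finite set X to a finite set Y, and any pair of probability distributions P₀, P₁ on X, the induced output distributions M₀, M₁ (where Mᵥ(y) = Σ_x Q(y|x)Pᵥ(x)) satisfy ‖M₀ − M₁‖_TV ≤ ((e^ε − 1)/(e^ε + 1)) · ‖P₀ − P₁‖_TV. -/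
open Real Finset

/-!
Under ε-LDP any two rows of `Q` satisfy `Q x y ≤ e^ε Q x' y` and conversely, which forces
`|Q x y - Q x' y| ≤ (e^ε-1)/(e^ε+1) · (Q x y + Q x' y)`; summing over `y`, any two rows are at
total variation distance at most `(e^ε-1)/(e^ε+1)`. Dobrushin's argument then shows that a
kernel whose rows are pairwise this close contracts every signed measure of total mass zero,
in particular `P₀ - P₁`, by the same factor.
-/

lemma abs_sub_le_div_mul_add {E a b : ℝ} (hE : 0 < E + 1) (hab : a ≤ E * b) (hba : b ≤ E * a) :
    |a - b| ≤ (E - 1) / (E + 1) * (a + b) := by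
  rw [div_mul_eq_mul_div, abs_le, neg_le, le_div_iff₀ hE, le_div_iff₀ hE]
  constructor <;> linarith

section Dobrushin

variable {X Y : Type*} [Fintype X] [Fintype Y]

/-- Since `∑ f = 0`, `h` may be shifted to the midpoint of its range, where `|h - m| ≤ c`. -/
lemma abs_sum_mul_le_of_sum_eq_zero {f h : X → ℝ} {c : ℝ} (hf : ∑ x, f x = 0)
    (hh : ∀ x x', h x - h x' ≤ 2 * c) : |∑ x, f x * h x| ≤ c * ∑ x, |f x| := by
  cases isEmpty_or_nonempty X
  · simp
  obtain ⟨xmax, hxmax⟩ := Finite.exists_max h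
  obtain ⟨xmin, hxmin⟩ := Finite.exists_min h
  set m := (h xmax + h xmin) / 2 with hm
  have hclose : ∀ x, |h x - m| ≤ c := fun x => by
    have := hh xmax xmin
    rw [abs_le]
    constructor <;> linarith [hxmax x, hxmin x, hm]
  have hshift : ∑ x, f x * h x = ∑ x, f x * (h x - m) := by
    simp only [mul_sub, sum_sub_distrib, ← sum_mul, hf, zero_mul, sub_zero]
  calc |∑ x, f x * h x| = |∑ x, f x * (h x - m)| := by rw [hshift]
    _ ≤ ∑ x, |f x| * |h x - m| := by
        simpa only [abs_mul] using abs_sum_le_sum_abs (fun x => f x * (h x - m)) univ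
    _ ≤ ∑ x, |f x| * c := by gcongr with x; exact hclose x
    _ = c * ∑ x, |f x| := by rw [← sum_mul, mul_comm]

lemma sum_abs_sum_mul_le_of_sum_eq_zero {Q : X → Y → ℝ} {f : X → ℝ} {c : ℝ}
    (hf : ∑ x, f x = 0) (hQ : ∀ x x', ∑ y, |Q x y - Q x' y| ≤ 2 * c) :
    ∑ y, |∑ x, Q x y * f x| ≤ c * ∑ x, |f x| := by
  set g : Y → ℝ := fun y => ∑ x, Q x y * f x
  set σ : Y → ℝ := fun y => if 0 ≤ g y then 1 else -1
  have hσ_abs : ∀ y, |g y| = σ y * g y := fun y => by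
    by_cases hy : 0 ≤ g y
    · simp [σ, hy, abs_of_nonneg hy]
    · simp [σ, hy, abs_of_neg (not_le.mp hy)]
  have hσ_bound : ∀ y, |σ y| ≤ 1 := fun y => by
    by_cases hy : 0 ≤ g y <;> simp [σ, hy]
  have hswap : ∑ y, |g y| = ∑ x, f x * ∑ y, σ y * Q x y := by
    simp only [hσ_abs, g, mul_sum]
    rw [sum_comm]
    exact sum_congr rfl fun x _ => sum_congr rfl fun y _ => by ring
  rw [hswap]
  refine le_of_abs_le (abs_sum_mul_le_of_sum_eq_zero hf fun x x' => ?_)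
  calc ∑ y, σ y * Q x y - ∑ y, σ y * Q x' y = ∑ y, σ y * (Q x y - Q x' y) := by
        simp only [mul_sub, sum_sub_distrib]
    _ ≤ ∑ y, |Q x y - Q x' y| := by
        gcongr with y
        calc σ y * (Q x y - Q x' y) ≤ |σ y| * |Q x y - Q x' y| := by
              rw [← abs_mul]; exact le_abs_self _
          _ ≤ |Q x y - Q x' y| := mul_le_of_le_one_left (abs_nonneg _) (hσ_bound y)
    _ ≤ 2 * c := hQ x x'

end Dobrushin

theorem ldp_tv_contraction_general
    {X Y : Type*} [Fintype X] [Fintype Y]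
    (ε : ℝ) (Q : X → Y → ℝ)
    (hQrow : ∀ x, ∑ y, Q x y = 1)
    (hLDP : ∀ x x' : X, ∀ y : Y, Q x y ≤ Real.exp ε * Q x' y)
    (P₀ P₁ : X → ℝ)
    (hP₀sum : ∑ x, P₀ x = 1) (hP₁sum : ∑ x, P₁ x = 1) :
    (1/2) * ∑ y, |(∑ x, Q x y * P₀ x) - (∑ x, Q x y * P₁ x)| ≤
      ((Real.exp ε - 1) / (Real.exp ε + 1)) * ((1/2) * ∑ x, |P₀ x - P₁ x|) := by
  set k := (Real.exp ε - 1) / (Real.exp ε + 1)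
  have hrows : ∀ x x', ∑ y, |Q x y - Q x' y| ≤ 2 * k := fun x x' =>
    calc ∑ y, |Q x y - Q x' y| ≤ ∑ y, k * (Q x y + Q x' y) := by
          gcongr with y
          exact abs_sub_le_div_mul_add (by positivity) (hLDP x x' y) (hLDP x' x y)
      _ = 2 * k := by rw [← mul_sum, sum_add_distrib, hQrow, hQrow]; ring
  have hmass : ∑ x, (P₀ x - P₁ x) = 0 := by rw [sum_sub_distrib, hP₀sum, hP₁sum, sub_self]
  calc (1/2) * ∑ y, |(∑ x, Q x y * P₀ x) - (∑ x, Q x y * P₁ x)|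
      = (1/2) * ∑ y, |∑ x, Q x y * (P₀ x - P₁ x)| := by simp only [mul_sub, sum_sub_distrib]
    _ ≤ (1/2) * (k * ∑ x, |P₀ x - P₁ x|) := by
        gcongr; exact sum_abs_sum_mul_le_of_sum_eq_zero hmass hrows
    _ = k * ((1/2) * ∑ x, |P₀ x - P₁ x|) := by ring

/-- Under any ε-locally differentially private mechanism, the total variation
distance of the induced marginals contracts by a factor `(e^ε−1)/(e^ε+1)`. -/
theorem ldp_tv_contraction
    {X Y : Type*} [Fintype X] [Fintype Y]
    (ε : ℝ) (hε : 0 ≤ ε) (Q : X → Y → ℝ)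
    (hQnonneg : ∀ x y, 0 ≤ Q x y) (hQrow : ∀ x, ∑ y, Q x y = 1)
    (hLDP : ∀ x x' : X, ∀ y : Y, Q x y ≤ Real.exp ε * Q x' y)
    (P₀ P₁ : X → ℝ)
    (hP₀ : ∀ x, 0 ≤ P₀ x) (hP₁ : ∀ x, 0 ≤ P₁ x)
    (hP₀sum : ∑ x, P₀ x = 1) (hP₁sum : ∑ x, P₁ x = 1) :
    (1/2) * ∑ y, |(∑ x, Q x y * P₀ x) - (∑ x, Q x y * P₁ x)| ≤
      ((Real.exp ε - 1) / (Real.exp ε + 1)) * ((1/2) * ∑ x, |P₀ x - P₁ x|) :=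
  ldp_tv_contraction_general ε Q hQrow hLDP P₀ P₁ hP₀sum hP₁sum
end

section
/- Let P₀, P₁ be probability distributions on a finite set X, let T = {x : P₀(x) ≥ P₁(x)}, and let Q be the binary mechanism with outputs {0,1} defined by Q(0|x) = e^ε/(1+e^ε) if x ∈ T and 1/(1+e^ε) otherwise, and Q(1|x) = 1 − Q(0|x). Then the induced output distributions satisfy ‖M₀ − M₁‖_TV = ((e^ε − 1)/(e^ε + 1)) ‖P₀ − P₁‖_TV. -/
/-!
Write `f = P₀ - P₁` and `D = ∑_{x ∈ T} f x`, so that `∑ f = 0` and `‖P₀ - P₁‖_TV = D`.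
Since `Q(0|·)` takes only the two values `p = e^ε/(1+e^ε)` on `T` and `q = 1/(1+e^ε)` off `T`,
the `q`-part integrates `f` to zero and `M₀(0) - M₁(0) = (p - q) D`; as `Q(1|·) = 1 - Q(0|·)`,
`M₀(1) - M₁(1) = -(p - q) D`. Hence `‖M₀ - M₁‖_TV = (p - q) D` with `p - q = (e^ε-1)/(e^ε+1)`.
-/

open Real Finset

namespace BinaryMechanism

variable {ι : Type*} (s : Finset ι) (f : ι → ℝ)

theorem sum_abs_eq_two_mul_sum_filter_nonneg (hf : ∑ i ∈ s, f i = 0) :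
    ∑ i ∈ s, |f i| = 2 * ∑ i ∈ s with 0 ≤ f i, f i := by
  have habs : ∀ i, |f i| = 2 * (if 0 ≤ f i then f i else 0) - f i := by
    intro i
    split_ifs with h
    · rw [abs_of_nonneg h]; ring
    · rw [abs_of_neg (not_le.mp h)]; ring
  simp only [habs, sum_sub_distrib, ← mul_sum, ← sum_filter, hf, sub_zero]

theorem sum_ite_mul_eq_of_sum_eq_zero (hf : ∑ i ∈ s, f i = 0) (p : ι → Prop) [DecidablePred p]
    (a b : ℝ) :
    ∑ i ∈ s, (if p i then a else b) * f i = (a - b) * ∑ i ∈ s with p i, f i := by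
  have hsplit : ∀ i, (if p i then a else b) * f i
      = b * f i + (a - b) * (if p i then f i else 0) := by
    intro i
    split_ifs <;> ring
  simp only [hsplit, sum_add_distrib, ← mul_sum, ← sum_filter, hf, mul_zero, zero_add]

theorem sum_one_sub_mul_eq_neg_of_sum_eq_zero (hf : ∑ i ∈ s, f i = 0) (g : ι → ℝ) :
    ∑ i ∈ s, (1 - g i) * f i = -∑ i ∈ s, g i * f i := by
  simp only [sub_mul, one_mul, sum_sub_distrib, hf, zero_sub]

theorem exp_div_one_add_exp_sub_one_div (ε : ℝ) :
    exp ε / (1 + exp ε) - 1 / (1 + exp ε) = (exp ε - 1) / (exp ε + 1) := by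
  rw [← sub_div, add_comm]

end BinaryMechanism

open BinaryMechanism in
theorem binary_mechanism_tv_general
    {X : Type*} [Fintype X]
    (ε : ℝ) (hε : 0 ≤ ε)
    (P₀ P₁ : X → ℝ)
    (hP₀sum : ∑ x, P₀ x = 1) (hP₁sum : ∑ x, P₁ x = 1)
    (Q : X → Fin 2 → ℝ)
    (hQ0 : ∀ x, Q x 0 = if P₁ x ≤ P₀ x then Real.exp ε / (1 + Real.exp ε)
                        else 1 / (1 + Real.exp ε))
    (hQ1 : ∀ x, Q x 1 = 1 - Q x 0) :
    (1/2) * ∑ y, |(∑ x, Q x y * P₀ x) - (∑ x, Q x y * P₁ x)| =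
      ((Real.exp ε - 1) / (Real.exp ε + 1)) * ((1/2) * ∑ x, |P₀ x - P₁ x|) := by
  set c := (exp ε - 1) / (exp ε + 1)
  set D := ∑ x with P₁ x ≤ P₀ x, (P₀ x - P₁ x)
  have hf : ∑ x, (P₀ x - P₁ x) = 0 := by rw [sum_sub_distrib, hP₀sum, hP₁sum, sub_self]
  have hdiff : ∀ y, (∑ x, Q x y * P₀ x) - ∑ x, Q x y * P₁ x = ∑ x, Q x y * (P₀ x - P₁ x) :=
    fun y ↦ by simp only [mul_sub, sum_sub_distrib]
  have hM0 : ∑ x, Q x 0 * (P₀ x - P₁ x) = c * D := by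
    simp only [hQ0, sum_ite_mul_eq_of_sum_eq_zero _ _ hf, exp_div_one_add_exp_sub_one_div, c, D]
  have hM1 : ∑ x, Q x 1 * (P₀ x - P₁ x) = -(c * D) := by
    simp only [hQ1, sum_one_sub_mul_eq_neg_of_sum_eq_zero _ _ hf, hM0]
  have hTV : ∑ x, |P₀ x - P₁ x| = 2 * D := by
    simp only [sum_abs_eq_two_mul_sum_filter_nonneg _ _ hf, sub_nonneg, D]
  have hc : 0 ≤ c := div_nonneg (by linarith [one_le_exp hε]) (by positivity)
  have hD : 0 ≤ D := sum_nonneg fun x hx ↦ sub_nonneg.mpr (mem_filter.mp hx).2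
  rw [Fin.sum_univ_two, hdiff, hdiff, hM0, hM1, abs_neg, abs_of_nonneg (mul_nonneg hc hD), hTV]
  ring

/-- The binary mechanism achieves total variation
`((e^ε−1)/(e^ε+1))‖P₀−P₁‖_TV` between the induced marginals. -/
theorem binary_mechanism_tv
    {X : Type*} [Fintype X]
    (ε : ℝ) (hε : 0 ≤ ε)
    (P₀ P₁ : X → ℝ)
    (hP₀ : ∀ x, 0 ≤ P₀ x) (hP₁ : ∀ x, 0 ≤ P₁ x)
    (hP₀sum : ∑ x, P₀ x = 1) (hP₁sum : ∑ x, P₁ x = 1)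
    (Q : X → Fin 2 → ℝ)
    (hQ0 : ∀ x, Q x 0 = if P₁ x ≤ P₀ x then Real.exp ε / (1 + Real.exp ε)
                        else 1 / (1 + Real.exp ε))
    (hQ1 : ∀ x, Q x 1 = 1 - Q x 0) :
    (1/2) * ∑ y, |(∑ x, Q x y * P₀ x) - (∑ x, Q x y * P₁ x)| =
      ((Real.exp ε - 1) / (Real.exp ε + 1)) * ((1/2) * ∑ x, |P₀ x - P₁ x|) :=
  binary_mechanism_tv_general ε hε P₀ P₁ hP₀sum hP₁sum Q hQ0 hQ1
end

section
/- Let P₀, P₁ be probability distributions on a finite set X and T = {x : P₀(x) ≥ P₁(x)}. For any vector s ∈ {1, e^ε}^X, ((e^ε−1)/(e^ε+1)) Σ_x |P₀(x)−P₁(x)| s(x) ≥ |Σ_x (P₀(x)−P₁(x)) s(x)|. -/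
open Real Finset

/-! Since `∑ (P₀ - P₁) = 0`, the sum `∑ (P₀ - P₁) s` does not change when `s` is shifted by a
constant. Shifting by the harmonic mean `t = 2a/(a+1)` of `1` and `a = e^ε` makes
`|s x - t| = ((a-1)/(a+1)) s x` at both possible values of `s x`, and the triangle inequality
finishes the proof. -/

lemma abs_sub_harmonic_mean_eq {a u : ℝ} (ha : 1 ≤ a) (hu : u = 1 ∨ u = a) :
    |u - 2 * a / (a + 1)| = (a - 1) / (a + 1) * u := by
  have ha₁ : 0 < a + 1 := by linarith
  rcases hu with rfl | rfl
  · rw [abs_of_nonpos] <;> field_simp <;> linarith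
  · rw [abs_of_nonneg] <;> field_simp <;> nlinarith

lemma sum_mul_sub_const_of_sum_eq_zero {ι : Type*} (S : Finset ι) {d : ι → ℝ}
    (hd : ∑ i ∈ S, d i = 0) (s : ι → ℝ) (t : ℝ) :
    ∑ i ∈ S, d i * (s i - t) = ∑ i ∈ S, d i * s i := by
  simp only [mul_sub, sum_sub_distrib, ← sum_mul, hd, zero_mul, sub_zero]

theorem abs_sum_mul_le_of_sum_eq_zero_s10 {ι : Type*} (S : Finset ι) {d s : ι → ℝ} {a : ℝ}
    (ha : 1 ≤ a) (hd : ∑ i ∈ S, d i = 0) (hs : ∀ i ∈ S, s i = 1 ∨ s i = a) :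
    |∑ i ∈ S, d i * s i| ≤ (a - 1) / (a + 1) * ∑ i ∈ S, |d i| * s i := by
  calc |∑ i ∈ S, d i * s i|
      = |∑ i ∈ S, d i * (s i - 2 * a / (a + 1))| := by
        rw [sum_mul_sub_const_of_sum_eq_zero S hd]
    _ ≤ ∑ i ∈ S, |d i * (s i - 2 * a / (a + 1))| := abs_sum_le_sum_abs _ _
    _ = (a - 1) / (a + 1) * ∑ i ∈ S, |d i| * s i := by
        rw [mul_sum]
        refine sum_congr rfl fun i hi => ?_
        rw [abs_mul, abs_sub_harmonic_mean_eq ha (hs i hi)]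
        ring

theorem tv_dual_feasibility_general
    {X : Type*} [Fintype X]
    (ε : ℝ) (hε : 0 ≤ ε)
    (P₀ P₁ : X → ℝ)
    (hP₀sum : ∑ x, P₀ x = 1) (hP₁sum : ∑ x, P₁ x = 1)
    (s : X → ℝ) (hs : ∀ x, s x = 1 ∨ s x = Real.exp ε) :
    |∑ x, (P₀ x - P₁ x) * s x| ≤
      ((Real.exp ε - 1) / (Real.exp ε + 1)) * ∑ x, |P₀ x - P₁ x| * s x := by
  have hsum : ∑ x, (P₀ x - P₁ x) = 0 := by
    rw [sum_sub_distrib, hP₀sum, hP₁sum, sub_self]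
  exact abs_sum_mul_le_of_sum_eq_zero_s10 univ (one_le_exp hε) hsum fun x _ => hs x

/-- Dual feasibility for the TV linear program: for any staircase pattern
`s ∈ {1, e^ε}^X`,
`((e^ε−1)/(e^ε+1)) Σ_x |P₀(x)−P₁(x)| s(x) ≥ |Σ_x (P₀(x)−P₁(x)) s(x)|`. -/
theorem tv_dual_feasibility
    {X : Type*} [Fintype X]
    (ε : ℝ) (hε : 0 ≤ ε)
    (P₀ P₁ : X → ℝ)
    (hP₀ : ∀ x, 0 ≤ P₀ x) (hP₁ : ∀ x, 0 ≤ P₁ x)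
    (hP₀sum : ∑ x, P₀ x = 1) (hP₁sum : ∑ x, P₁ x = 1)
    (s : X → ℝ) (hs : ∀ x, s x = 1 ∨ s x = Real.exp ε) :
    |∑ x, (P₀ x - P₁ x) * s x| ≤
      ((Real.exp ε - 1) / (Real.exp ε + 1)) * ∑ x, |P₀ x - P₁ x| * s x :=
  tv_dual_feasibility_general ε hε P₀ P₁ hP₀sum hP₁sum s hs
end

section
/- For any ε ≥ 0 and any pair of probability distributions P₀, P₁ on a finite set, the KL divergence of the induced marginals under the binary mechanism satisfies D_kl(M₀‖M₁) ≥ 2((e^ε−1)/(e^ε+1))² ‖P₀−P₁‖²_TV. -/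
open Real Finset

/-!
Because `P₀ x ≥ P₁ x` exactly where the mechanism favours output `0`, the output marginals
`M₀ = (p, 1 - p)` and `M₁ = (q, 1 - q)` satisfy
`p - q = ((e^ε - 1)/(e^ε + 1)) ‖P₀ - P₁‖_TV`. The bound is then Pinsker's inequality
`2 (p - q)² ≤ D_kl(M₀ ‖ M₁)` for binary distributions: as a function of `q`, the gap
between the two sides vanishes at `q = p` and its derivative `(q - p) (1/(q (1 - q)) - 4)` has
the sign of `q - p`, because `q (1 - q) ≤ 1/4`.
-/

lemma hasDerivAt_binaryKL_sub_sq (p : ℝ) {q : ℝ} (hq₀ : 0 < q) (hq₁ : q < 1) :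
    HasDerivAt
      (fun t ↦ p * (log p - log t) + (1 - p) * (log (1 - p) - log (1 - t)) - 2 * (p - t) ^ 2)
      ((q - p) * (1 / (q * (1 - q)) - 4)) q := by
  have hlog : HasDerivAt (fun t ↦ log t) q⁻¹ q := hasDerivAt_log hq₀.ne'
  have hlog_one_sub : HasDerivAt (fun t ↦ log (1 - t)) (-(1 - q)⁻¹) q := by
    have h := ((hasDerivAt_id q).const_sub 1).log (show 1 - id q ≠ 0 by simp; linarith)
    simpa [div_eq_mul_inv] using h
  have := ((hlog.const_sub (log p)).const_mul p).add
    ((hlog_one_sub.const_sub (log (1 - p))).const_mul (1 - p)) |>.sub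
    (((hasDerivAt_id q).const_sub p).pow 2 |>.const_mul 2)
  refine this.congr_deriv ?_
  have : (1 : ℝ) - q ≠ 0 := by linarith
  simp only [id, Nat.cast_ofNat]
  field_simp
  ring

lemma two_mul_sq_sub_le_binaryKL_of_le {p q : ℝ} (hp₀ : 0 < p) (hpq : p ≤ q) (hq₁ : q < 1) :
    2 * (p - q) ^ 2 ≤ p * (log p - log q) + (1 - p) * (log (1 - p) - log (1 - q)) := by
  have hmono := monotoneOn_of_hasDerivWithinAt_nonneg (convex_Icc p q)
    (f := fun t ↦ p * (log p - log t) + (1 - p) * (log (1 - p) - log (1 - t)) - 2 * (p - t) ^ 2)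
    (fun t ht ↦ (hasDerivAt_binaryKL_sub_sq p (by linarith [ht.1]) (by linarith [ht.2]))
      |>.continuousAt.continuousWithinAt)
    (fun t ht ↦ by
      rw [interior_Icc] at ht
      exact (hasDerivAt_binaryKL_sub_sq p (by linarith [ht.1]) (by linarith [ht.2]))
        |>.hasDerivWithinAt)
    (fun t ht ↦ by
      rw [interior_Icc] at ht
      have ht₀ : 0 < t * (1 - t) := mul_pos (by linarith [ht.1]) (by linarith [ht.2])
      have : 4 ≤ 1 / (t * (1 - t)) := by
        rw [le_div_iff₀ ht₀]; nlinarith [sq_nonneg (2 * t - 1)]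
      exact mul_nonneg (by linarith [ht.1]) (by linarith))
  have := hmono (Set.left_mem_Icc.2 hpq) (Set.right_mem_Icc.2 hpq) hpq
  simp only [sub_self] at this
  linarith

theorem pinsker_binary {p q : ℝ} (hp₀ : 0 < p) (hp₁ : p < 1) (hq₀ : 0 < q) (hq₁ : q < 1) :
    2 * (p - q) ^ 2 ≤ p * log (p / q) + (1 - p) * log ((1 - p) / (1 - q)) := by
  rw [log_div hp₀.ne' hq₀.ne', log_div (by linarith) (by linarith)]
  rcases le_total p q with hpq | hqp
  · exact two_mul_sq_sub_le_binaryKL_of_le hp₀ hpq hq₁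
  · have := two_mul_sq_sub_le_binaryKL_of_le (p := 1 - p) (q := 1 - q)
      (by linarith) (by linarith) (by linarith)
    simp only [sub_sub_cancel] at this
    linarith

lemma sum_ite_le_mul_sub {X : Type*} [Fintype X] (a b : ℝ) {P₀ P₁ : X → ℝ}
    (h : ∑ x, P₀ x = ∑ x, P₁ x) :
    ∑ x, (if P₁ x ≤ P₀ x then a else b) * (P₀ x - P₁ x) =
      (a - b) / 2 * ∑ x, |P₀ x - P₁ x| := by
  have hpointwise : ∀ x, (if P₁ x ≤ P₀ x then a else b) * (P₀ x - P₁ x) =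
      (a + b) / 2 * (P₀ x - P₁ x) + (a - b) / 2 * |P₀ x - P₁ x| := by
    intro x
    split_ifs with hx
    · rw [abs_of_nonneg (sub_nonneg.2 hx)]; ring
    · rw [abs_of_neg (sub_neg.2 (not_le.1 hx))]; ring
  simp only [hpointwise, sum_add_distrib, ← mul_sum, sum_sub_distrib, h, sub_self, mul_zero,
    zero_add]

lemma sum_mul_mem_Ioo_zero_one {X : Type*} [Fintype X] {f P : X → ℝ}
    (hf : ∀ x, f x ∈ Set.Ioo 0 1) (hP : ∀ x, 0 ≤ P x) (hPsum : ∑ x, P x = 1) :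
    ∑ x, f x * P x ∈ Set.Ioo (0 : ℝ) 1 := by
  simpa only [smul_eq_mul, mul_comm] using
    (convex_Ioo (0 : ℝ) 1).sum_mem (fun x _ ↦ hP x) hPsum (fun x _ ↦ hf x)

theorem binary_mechanism_kl_lower_bound_general
    {X : Type*} [Fintype X]
    (ε : ℝ)
    (P₀ P₁ : X → ℝ)
    (hP₀ : ∀ x, 0 ≤ P₀ x) (hP₁ : ∀ x, 0 ≤ P₁ x)
    (hP₀sum : ∑ x, P₀ x = 1) (hP₁sum : ∑ x, P₁ x = 1)
    (Q : X → Fin 2 → ℝ)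
    (hQ0 : ∀ x, Q x 0 = if P₁ x ≤ P₀ x then Real.exp ε / (1 + Real.exp ε)
                        else 1 / (1 + Real.exp ε))
    (hQ1 : ∀ x, Q x 1 = 1 - Q x 0) :
    2 * ((Real.exp ε - 1) / (Real.exp ε + 1))^2 *
        ((1/2) * ∑ x, |P₀ x - P₁ x|)^2 ≤
      ∑ y, (∑ x, Q x y * P₀ x) *
        Real.log ((∑ x, Q x y * P₀ x) / (∑ x, Q x y * P₁ x)) := by
  have hE := exp_pos ε
  have hQ0_mem : ∀ x, Q x 0 ∈ Set.Ioo 0 1 := fun x ↦ by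
    rw [hQ0 x]
    split_ifs <;> exact ⟨by positivity, (div_lt_one (by linarith)).2 (by linarith)⟩
  have hmarginal₁ : ∀ P : X → ℝ, ∑ x, P x = 1 → ∑ x, Q x 1 * P x = 1 - ∑ x, Q x 0 * P x :=
    fun P hP ↦ by simp only [hQ1, sub_mul, one_mul, sum_sub_distrib, hP]
  obtain ⟨hp₀, hp₁⟩ := sum_mul_mem_Ioo_zero_one hQ0_mem hP₀ hP₀sum
  obtain ⟨hq₀, hq₁⟩ := sum_mul_mem_Ioo_zero_one hQ0_mem hP₁ hP₁sum
  have htv : ∑ x, Q x 0 * P₀ x - ∑ x, Q x 0 * P₁ x =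
      (exp ε - 1) / (exp ε + 1) * ((1 / 2) * ∑ x, |P₀ x - P₁ x|) := by
    rw [← sum_sub_distrib]
    simp only [← mul_sub, hQ0]
    rw [sum_ite_le_mul_sub _ _ (hP₀sum.trans hP₁sum.symm)]
    field_simp
    ring
  rw [Fin.sum_univ_two, hmarginal₁ P₀ hP₀sum, hmarginal₁ P₁ hP₁sum]
  calc _ = 2 * (∑ x, Q x 0 * P₀ x - ∑ x, Q x 0 * P₁ x) ^ 2 := by rw [htv]; ring
    _ ≤ _ := pinsker_binary hp₀ hp₁ hq₀ hq₁

/-- Under the binary mechanism, the KL divergence of the induced (binary)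
marginals is at least `2((e^ε−1)/(e^ε+1))² ‖P₀−P₁‖²_TV` (Pinsker). -/
theorem binary_mechanism_kl_lower_bound
    {X : Type*} [Fintype X]
    (ε : ℝ) (hε : 0 ≤ ε)
    (P₀ P₁ : X → ℝ)
    (hP₀ : ∀ x, 0 ≤ P₀ x) (hP₁ : ∀ x, 0 ≤ P₁ x)
    (hP₀sum : ∑ x, P₀ x = 1) (hP₁sum : ∑ x, P₁ x = 1)
    (Q : X → Fin 2 → ℝ)
    (hQ0 : ∀ x, Q x 0 = if P₁ x ≤ P₀ x then Real.exp ε / (1 + Real.exp ε)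
                        else 1 / (1 + Real.exp ε))
    (hQ1 : ∀ x, Q x 1 = 1 - Q x 0) :
    2 * ((Real.exp ε - 1) / (Real.exp ε + 1))^2 *
        ((1/2) * ∑ x, |P₀ x - P₁ x|)^2 ≤
      ∑ y, (∑ x, Q x y * P₀ x) *
        Real.log ((∑ x, Q x y * P₀ x) / (∑ x, Q x y * P₁ x)) :=
  binary_mechanism_kl_lower_bound_general ε P₀ P₁ hP₀ hP₁ hP₀sum hP₁sum Q hQ0 hQ1
end

section
/- Let P be a probability distribution on a finite set X with maximum atom p* = max_x P(x). If p* ≤ 1/2, then there exists a subset A ⊂ X with 1/2 − p* ≤ P(A) ≤ 1/2. -/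
open Finset

/-
Take `A` maximal under inclusion among the sets of mass at most `1/2`. The whole space has
mass `1`, so some `x` lies outside `A`, and by maximality adding it pushes the mass above
`1/2`; since `P x ≤ p*`, the mass of `A` exceeds `1/2 - p*`.
-/

namespace Finset

variable {ι M : Type*} [LinearOrder M]

theorem exists_maximal_subset_sum_le [AddCommMonoid M] (s : Finset ι) (f : ι → M) {t : M}
    (ht : 0 ≤ t) :
    ∃ A ⊆ s, ∑ x ∈ A, f x ≤ t ∧ ∀ x ∈ s, x ∉ A → t < ∑ y ∈ A, f y + f x := by
  classical
  obtain ⟨A, hAmax⟩ :=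
    (s.powerset.filter fun A ↦ ∑ x ∈ A, f x ≤ t).exists_maximal ⟨∅, by simp [ht]⟩
  obtain ⟨hAs, hAt⟩ := by simpa only [mem_filter, mem_powerset] using hAmax.prop
  refine ⟨A, hAs, hAt, fun x hxs hxA ↦ ?_⟩
  by_contra! hle
  have hinsert : insert x A ∈ s.powerset.filter fun A ↦ ∑ x ∈ A, f x ≤ t := by
    simpa [insert_subset_iff, hxs, hAs, sum_insert hxA, add_comm] using hle
  exact hxA (hAmax.2 hinsert (subset_insert x A) (mem_insert_self x A))

theorem exists_ssubset_sub_sup'_le_sum_le [AddCommGroup M] [IsOrderedAddMonoid M] (s : Finset ι)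
    (hs : s.Nonempty) (f : ι → M) {t : M} (ht : 0 ≤ t) (hts : t < ∑ x ∈ s, f x) :
    ∃ A ⊂ s, t - s.sup' hs f ≤ ∑ x ∈ A, f x ∧ ∑ x ∈ A, f x ≤ t := by
  obtain ⟨A, hAs, hAt, hmax⟩ := s.exists_maximal_subset_sum_le f ht
  have hAs' : A ⊂ s := hAs.ssubset_of_ne (by rintro rfl; exact hts.not_ge hAt)
  obtain ⟨x, hxs, hxA⟩ := exists_of_ssubset hAs'
  refine ⟨A, hAs', ?_, hAt⟩
  calc t - s.sup' hs f ≤ t - f x := sub_le_sub_left (le_sup' f hxs) t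
    _ ≤ ∑ y ∈ A, f y := sub_le_iff_le_add.mpr (hmax x hxs hxA).le

end Finset

theorem exists_subset_near_half_general
    {X : Type*} [Fintype X] [Nonempty X]
    (P : X → ℝ) (hPsum : ∑ x, P x = 1) :
    ∃ A : Finset X, A ⊂ Finset.univ ∧
      1/2 - Finset.univ.sup' Finset.univ_nonempty P ≤ ∑ x ∈ A, P x ∧
      ∑ x ∈ A, P x ≤ 1/2 :=
  univ.exists_ssubset_sub_sup'_le_sum_le univ_nonempty P (by norm_num) (by norm_num [hPsum])

/-- If the maximum atom `p* = max_x P(x)` of a distribution `P` on a finite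
nonempty set satisfies `p* ≤ 1/2`, there is a subset `A` with
`1/2 − p* ≤ P(A) ≤ 1/2`. -/
theorem exists_subset_near_half
    {X : Type*} [Fintype X] [Nonempty X]
    (P : X → ℝ) (hP : ∀ x, 0 ≤ P x) (hPsum : ∑ x, P x = 1)
    (hhalf : Finset.univ.sup' Finset.univ_nonempty P ≤ 1/2) :
    ∃ A : Finset X, A ⊂ Finset.univ ∧
      1/2 - Finset.univ.sup' Finset.univ_nonempty P ≤ ∑ x ∈ A, P x ∧
      ∑ x ∈ A, P x ≤ 1/2 :=
  exists_subset_near_half_general P hPsum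
end

section
/- Let P be a probability distribution on a finite set X with max_x P(x) ≤ 1/2, and let T be a maximizer of P(A)P(A^c) over subsets A ⊆ X with minimal probability among maximizers. Then 1/4 ≤ P(T) ≤ 1/2. -/
/-!
The complement of a maximizer `T` of `P(A)(1 - P(A))` is again a maximizer, so minimality gives
`P(T) ≤ P(Tᶜ)`, i.e. `P(T) ≤ 1/2`. Since all atoms are at most `1/2`, some set has mass in
`[1/4, 3/4]`, hence product at least `3/16`; so `P(T)(1 - P(T)) ≥ 3/16`, which with `P(T) ≤ 1/2`
forces `P(T) ≥ 1/4`.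
-/

open Finset

theorem Finset.exists_sum_mem_Icc_of_forall_le {X : Type*} [Fintype X] (P : X → ℝ) {a δ : ℝ}
    (ha : 0 ≤ a) (hδ : 0 ≤ δ) (hPδ : ∀ x, P x ≤ δ) (haP : a ≤ ∑ x, P x) :
    ∃ A : Finset X, ∑ x ∈ A, P x ∈ Set.Icc a (a + δ) := by
  classical
  set F := univ.filter fun A : Finset X => ∑ x ∈ A, P x ≤ a + δ
  have hF : F.Nonempty := ⟨∅, by simp [F]; linarith⟩
  obtain ⟨A, hAF, hAmax⟩ := F.exists_max_image card hF
  have hA : ∑ x ∈ A, P x ≤ a + δ := (mem_filter.mp hAF).2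
  refine ⟨A, not_lt.mp fun hlt => ?_, hA⟩
  obtain ⟨x, hx⟩ : ∃ x, x ∉ A := by
    by_contra! hall
    rw [eq_univ_iff_forall.mpr hall] at hlt
    linarith
  have hins : insert x A ∈ F := by
    rw [mem_filter, sum_insert hx]
    exact ⟨mem_univ _, by linarith [hPδ x]⟩
  have hcard := hAmax _ hins
  rw [card_insert_of_notMem hx] at hcard
  omega

theorem Finset.sum_compl_eq_one_sub {X : Type*} [Fintype X] [DecidableEq X] {P : X → ℝ}
    (hPsum : ∑ x, P x = 1) (A : Finset X) : ∑ x ∈ Aᶜ, P x = 1 - ∑ x ∈ A, P x := by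
  rw [← hPsum, ← sum_add_sum_compl A P]
  ring

theorem max_product_partition_bounds_general
    {X : Type*} [Fintype X] [DecidableEq X]
    (P : X → ℝ) (hPsum : ∑ x, P x = 1)
    (hhalf : ∀ x, P x ≤ 1/2)
    (T : Finset X)
    (hTmax : ∀ A : Finset X,
      (∑ x ∈ A, P x) * (∑ x ∈ Aᶜ, P x) ≤ (∑ x ∈ T, P x) * (∑ x ∈ Tᶜ, P x))
    (hTmin : ∀ B : Finset X,
      (∀ A : Finset X,
        (∑ x ∈ A, P x) * (∑ x ∈ Aᶜ, P x) ≤ (∑ x ∈ B, P x) * (∑ x ∈ Bᶜ, P x)) →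
      ∑ x ∈ T, P x ≤ ∑ x ∈ B, P x) :
    1/4 ≤ ∑ x ∈ T, P x ∧ ∑ x ∈ T, P x ≤ 1/2 := by
  have hcompl := sum_compl_eq_one_sub hPsum
  have hTcompl_max : ∀ A : Finset X,
      (∑ x ∈ A, P x) * (∑ x ∈ Aᶜ, P x) ≤ (∑ x ∈ Tᶜ, P x) * (∑ x ∈ Tᶜᶜ, P x) := by
    intro A
    rw [compl_compl, mul_comm (∑ x ∈ Tᶜ, P x)]
    exact hTmax A
  have hup : ∑ x ∈ T, P x ≤ 1/2 := by
    have := hTmin Tᶜ hTcompl_max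
    rw [hcompl] at this
    linarith
  obtain ⟨A, hA₁, hA₂⟩ := exists_sum_mem_Icc_of_forall_le P (a := 1/4) (by norm_num) (by norm_num)
    hhalf (by rw [hPsum]; norm_num)
  have hprod := hTmax A
  rw [hcompl, hcompl] at hprod
  have h316 : 3/16 ≤ (∑ x ∈ T, P x) * (1 - ∑ x ∈ T, P x) := by nlinarith
  exact ⟨by nlinarith, hup⟩

/-- If all atoms of `P` are at most `1/2` and `T` maximizes `P(A)P(A^c)` with
minimal probability among maximizers, then `1/4 ≤ P(T) ≤ 1/2`. -/
theorem max_product_partition_bounds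
    {X : Type*} [Fintype X] [DecidableEq X] [Nonempty X]
    (P : X → ℝ) (hP : ∀ x, 0 ≤ P x) (hPsum : ∑ x, P x = 1)
    (hhalf : ∀ x, P x ≤ 1/2)
    (T : Finset X)
    (hTmax : ∀ A : Finset X,
      (∑ x ∈ A, P x) * (∑ x ∈ Aᶜ, P x) ≤ (∑ x ∈ T, P x) * (∑ x ∈ Tᶜ, P x))
    (hTmin : ∀ B : Finset X,
      (∀ A : Finset X,
        (∑ x ∈ A, P x) * (∑ x ∈ Aᶜ, P x) ≤ (∑ x ∈ B, P x) * (∑ x ∈ Bᶜ, P x)) →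
      ∑ x ∈ T, P x ≤ ∑ x ∈ B, P x) :
    1/4 ≤ ∑ x ∈ T, P x ∧ ∑ x ∈ T, P x ≤ 1/2 :=
  max_product_partition_bounds_general P hPsum hhalf T hTmax hTmin
end
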